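/- With the setting of the semiconcavity of f(s,t) = (1/2)W₂²(exp^s_♯Φ₀, exp^t_♯Φ₁): the one-variable function g(s) := f(s,0) = (1/2) W₂²(exp^s_♯Φ₀, μ₁), where μ₁ = 𝗑_♯Φ₁, satisfies: s ↦ g(s) - (s²/2)∫|v|²dΦ₀ is concave on ℝ. -/

import Mathlib

open MeasureTheory Filter Topology
open scoped RealInnerProductSpace ENNReal

noncomputable section

/-- `γ` is a coupling of `μ` and `ν` if its marginals are `μ` and `ν`. -/
def IsCoupling {α β : Type*} [MeasurableSpace α] [MeasurableSpace β]
    (γ : MeasureTheory.Measure (α × β)) (μ : MeasureTheory.Measure α)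
    (ν : MeasureTheory.Measure β) : Prop :=
  γ.map Prod.fst = μ ∧ γ.map Prod.snd = ν

variable {X : Type*} [NormedAddCommGroup X] [InnerProductSpace ℝ X]
  [MeasurableSpace X] [BorelSpace X]

/-- The squared 2-Wasserstein distance, as the infimum of transport costs over couplings. -/
def W2sq (μ ν : Measure X) : ℝ :=
  sInf {c : ℝ | ∃ γ : Measure (X × X), IsProbabilityMeasure γ ∧ IsCoupling γ μ ν ∧
    c = ∫ p, ‖p.1 - p.2‖ ^ 2 ∂γ}

/-- The 2-Wasserstein distance. -/
def W2 (μ ν : Measure X) : ℝ := Real.sqrt (W2sq μ ν)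

/-- The exponential map `exp^t(x,v) = x + t v` on the tangent bundle `X × X`. -/
def expMap (t : ℝ) : X × X → X := fun p => p.1 + t • p.2

/-- A measure has finite second moment if `‖x‖²` is integrable. -/
def FiniteSecondMoment (μ : Measure X) : Prop := Integrable (fun x => ‖x‖ ^ 2) μ

/-!
Gluing a coupling of `exp^s_♯Φ₀` and `μ₁` along `exp^s` yields a coupling `σ` of `Φ₀` and `μ₁`
with the same cost. For every `t`, `(exp^t × id)_♯σ` couples `exp^t_♯Φ₀` and `μ₁`, so
`W₂²(exp^t_♯Φ₀, μ₁) ≤ ∫ ‖x + t v - y‖² dσ`, a quadratic in `t` with leading coefficient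
`∫ ‖v‖² dΦ₀`. Hence `½W₂²(exp^s_♯Φ₀, μ₁) - (s²/2)∫‖v‖²dΦ₀` is, at each `s`, the infimum of affine
functions lying above it everywhere, and is therefore concave.
-/

open ProbabilityTheory

theorem concaveOn_univ_of_le_affine_majorants {g : ℝ → ℝ}
    (h : ∀ s c, (∀ a b : ℝ, (∀ t, g t ≤ a + b * t) → c ≤ a + b * s) → c ≤ g s) :
    ConcaveOn ℝ Set.univ g := by
  refine ⟨convex_univ, fun x _ y _ p q hp hq hpq => h _ _ fun a b hab => ?_⟩
  have hx := mul_le_mul_of_nonneg_left (hab x) hp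
  have hy := mul_le_mul_of_nonneg_left (hab y) hq
  simp only [smul_eq_mul]
  linear_combination hx + hy + a * hpq

theorem MeasureTheory.Measure.map_prodMap_compProd_comap {α β γ : Type*} [MeasurableSpace α]
    [MeasurableSpace β] [MeasurableSpace γ] (μ : Measure α) [SFinite μ] (κ : Kernel β γ)
    [IsSFiniteKernel κ] {f : α → β} (hf : Measurable f) :
    (μ ⊗ₘ κ.comap f hf).map (Prod.map f id) = μ.map f ⊗ₘ κ := by
  ext s hs
  rw [Measure.map_apply (hf.prodMap measurable_id) hs,
    Measure.compProd_apply (hf.prodMap measurable_id hs), Measure.compProd_apply hs,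
    lintegral_map (Kernel.measurable_kernel_prodMk_left hs) hf]
  rfl

theorem IsCoupling.map_prodMap {α β α' β' : Type*} [MeasurableSpace α] [MeasurableSpace β]
    [MeasurableSpace α'] [MeasurableSpace β'] {σ : Measure (α × β)} {μ : Measure α}
    {ν : Measure β} (hσ : IsCoupling σ μ ν) {f : α → α'} {g : β → β'} (hf : Measurable f)
    (hg : Measurable g) : IsCoupling (σ.map (Prod.map f g)) (μ.map f) (ν.map g) := by
  constructor
  · rw [Measure.map_map measurable_fst (hf.prodMap hg), ← hσ.1,
      Measure.map_map hf measurable_fst]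
    rfl
  · rw [Measure.map_map measurable_snd (hf.prodMap hg), ← hσ.2,
      Measure.map_map hg measurable_snd]
    rfl

theorem IsCoupling.exists_lift {α β γ : Type*} [MeasurableSpace α] [MeasurableSpace β]
    [MeasurableSpace γ] [StandardBorelSpace γ] [Nonempty γ] {μ : Measure α}
    [IsProbabilityMeasure μ] {ν : Measure γ} {ρ : Measure (β × γ)} [IsFiniteMeasure ρ]
    {f : α → β} (hf : Measurable f) (hρ : IsCoupling ρ (μ.map f) ν) :
    ∃ σ : Measure (α × γ), IsProbabilityMeasure σ ∧ IsCoupling σ μ ν ∧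
      σ.map (Prod.map f id) = ρ := by
  set σ := μ ⊗ₘ ρ.condKernel.comap f hf
  have hσρ : σ.map (Prod.map f id) = ρ := by
    rw [Measure.map_prodMap_compProd_comap, ← hρ.1]
    exact ρ.disintegrate ρ.condKernel
  refine ⟨σ, inferInstance, ⟨Measure.fst_compProd _ _, ?_⟩, hσρ⟩
  rw [← hρ.2, ← hσρ, Measure.map_map measurable_snd (hf.prodMap measurable_id)]
  rfl

theorem W2sq_le_integral {E : Type*} [NormedAddCommGroup E] [MeasurableSpace E]
    {μ ν : Measure E} {γ : Measure (E × E)} [IsProbabilityMeasure γ]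
    (hγ : IsCoupling γ μ ν) : W2sq μ ν ≤ ∫ p, ‖p.1 - p.2‖ ^ 2 ∂γ :=
  csInf_le ⟨0, by rintro _ ⟨γ', -, -, rfl⟩; positivity⟩ ⟨γ, inferInstance, hγ, rfl⟩

theorem le_W2sq {E : Type*} [NormedAddCommGroup E] [MeasurableSpace E] {μ ν : Measure E}
    [IsProbabilityMeasure μ] [IsProbabilityMeasure ν] {c : ℝ}
    (h : ∀ γ : Measure (E × E), IsProbabilityMeasure γ → IsCoupling γ μ ν →
      c ≤ ∫ p, ‖p.1 - p.2‖ ^ 2 ∂γ) :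
    c ≤ W2sq μ ν :=
  le_csInf ⟨_, μ.prod ν, inferInstance, ⟨by simp, by simp⟩, rfl⟩
    (by rintro _ ⟨γ, hγ, hc, rfl⟩; exact h γ hγ hc)

theorem integral_norm_add_smul_sq {E Ω : Type*} [NormedAddCommGroup E] [InnerProductSpace ℝ E]
    [MeasurableSpace Ω] {μ : Measure Ω} {u w : Ω → E} (hu : MemLp u 2 μ) (hw : MemLp w 2 μ) (t : ℝ) :
    ∫ ω, ‖u ω + t • w ω‖ ^ 2 ∂μ =
      ∫ ω, ‖u ω‖ ^ 2 ∂μ + 2 * t * ∫ ω, ⟪u ω, w ω⟫ ∂μ + t ^ 2 * ∫ ω, ‖w ω‖ ^ 2 ∂μ := by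
  have hu2 := (memLp_two_iff_integrable_sq_norm hu.1).1 hu
  have hw2 := (memLp_two_iff_integrable_sq_norm hw.1).1 hw
  have huw : Integrable (fun ω => ⟪u ω, w ω⟫) μ :=
    memLp_one_iff_integrable.1 ((innerSL ℝ).memLp_of_bilin 1 hu hw)
  have hexpand : ∀ ω, ‖u ω + t • w ω‖ ^ 2 =
      ‖u ω‖ ^ 2 + 2 * t * ⟪u ω, w ω⟫ + t ^ 2 * ‖w ω‖ ^ 2 := fun ω => by
    rw [norm_add_sq_real, real_inner_smul_right, norm_smul, mul_pow, Real.norm_eq_abs, sq_abs]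
    ring
  have hlin : Integrable (fun ω => ‖u ω‖ ^ 2 + 2 * t * ⟪u ω, w ω⟫) μ :=
    hu2.add (huw.const_mul _)
  simp_rw [hexpand]
  rw [integral_add hlin (hw2.const_mul _), integral_add hu2 (huw.const_mul _),
    integral_const_mul, integral_const_mul]

section

variable [SecondCountableTopology X]

theorem measurable_expMap (t : ℝ) : Measurable (expMap (X := X) t) :=
  measurable_fst.add (measurable_snd.const_smul t)

theorem memLp_id_of_integrable_norm_sq_add {E : Type*} [NormedAddCommGroup E]
    [MeasurableSpace E] [BorelSpace E] [SecondCountableTopology E] {Φ : Measure (E × E)}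
    (hΦ : Integrable (fun p : E × E => ‖p.1‖ ^ 2 + ‖p.2‖ ^ 2) Φ) : MemLp id 2 Φ := by
  refine MemLp.of_fst_snd ⟨?_, ?_⟩
  · refine (memLp_two_iff_integrable_sq_norm measurable_fst.aestronglyMeasurable).2
      (hΦ.mono' (measurable_fst.norm.pow_const 2).aestronglyMeasurable ?_)
    filter_upwards with p
    simp
  · refine (memLp_two_iff_integrable_sq_norm measurable_snd.aestronglyMeasurable).2
      (hΦ.mono' (measurable_snd.norm.pow_const 2).aestronglyMeasurable ?_)
    filter_upwards with p
    simp

theorem W2sq_map_expMap_le {Φ₀ : Measure (X × X)} {μ₁ : Measure X}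
    {σ : Measure ((X × X) × X)} [IsProbabilityMeasure σ] (hσ : IsCoupling σ Φ₀ μ₁) (t : ℝ) :
    W2sq (Φ₀.map (expMap t)) μ₁ ≤ ∫ q, ‖expMap t q.1 - q.2‖ ^ 2 ∂σ := by
  have hmeas := (measurable_expMap (X := X) t).prodMap (measurable_id (α := X))
  have : IsProbabilityMeasure (σ.map (Prod.map (expMap t) id)) :=
    Measure.isProbabilityMeasure_map hmeas.aemeasurable
  have h := W2sq_le_integral (hσ.map_prodMap (measurable_expMap t) measurable_id)
  rwa [Measure.map_id, integral_map hmeas.aemeasurable (by fun_prop)] at h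

theorem integral_norm_expMap_sub_sq {Φ₀ : Measure (X × X)} {μ₁ : Measure X}
    {σ : Measure ((X × X) × X)} (hσ : IsCoupling σ Φ₀ μ₁) (hΦ₀ : MemLp id 2 Φ₀)
    (hμ₁ : MemLp id 2 μ₁) (t : ℝ) :
    ∫ q, ‖expMap t q.1 - q.2‖ ^ 2 ∂σ = ∫ q, ‖q.1.1 - q.2‖ ^ 2 ∂σ +
      2 * t * ∫ q, ⟪q.1.1 - q.2, q.1.2⟫ ∂σ + t ^ 2 * ∫ p, ‖p.2‖ ^ 2 ∂Φ₀ := by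
  have h₀ : MemLp Prod.fst 2 σ := (hσ.1 ▸ hΦ₀).comp_of_map measurable_fst.aemeasurable
  have h₁ : MemLp Prod.snd 2 σ := (hσ.2 ▸ hμ₁).comp_of_map measurable_snd.aemeasurable
  have hv : ∫ q, ‖q.1.2‖ ^ 2 ∂σ = ∫ p, ‖p.2‖ ^ 2 ∂Φ₀ := by
    rw [← hσ.1, integral_map measurable_fst.aemeasurable (by fun_prop)]
  simp_rw [expMap, add_sub_right_comm _ (t • _)]
  rw [integral_norm_add_smul_sq (u := fun q => q.1.1 - q.2) (h₀.fst.sub h₁) h₀.snd, hv]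

end

/-- Semiconcavity in one variable: `s ↦ (1/2)W₂²(exp^s_♯Φ₀, μ₁) - (s²/2)∫‖v‖²dΦ₀`
is concave on `ℝ`. -/
theorem semiconcavity_W2sq_expMap_one_var
    [CompleteSpace X] [SecondCountableTopology X]
    (Φ₀ : Measure (X × X)) (μ₁ : Measure X)
    (h0 : IsProbabilityMeasure Φ₀) (h1 : IsProbabilityMeasure μ₁)
    (hi0 : Integrable (fun p : X × X => ‖p.1‖ ^ 2 + ‖p.2‖ ^ 2) Φ₀)
    (hi1 : FiniteSecondMoment μ₁) :
    ConcaveOn ℝ Set.univ (fun s : ℝ =>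
      (1 / 2) * W2sq (Φ₀.map (expMap s)) μ₁ -
        (s ^ 2 / 2) * ∫ p, ‖p.2‖ ^ 2 ∂Φ₀) := by
  have hΦ₀ := memLp_id_of_integrable_norm_sq_add hi0
  have hμ₁ : MemLp id 2 μ₁ := (memLp_two_iff_integrable_sq_norm aestronglyMeasurable_id).2 hi1
  refine concaveOn_univ_of_le_affine_majorants fun s c hc => ?_
  have : IsProbabilityMeasure (Φ₀.map (expMap s)) :=
    Measure.isProbabilityMeasure_map (measurable_expMap s).aemeasurable
  suffices 2 * c + s ^ 2 * ∫ p, ‖p.2‖ ^ 2 ∂Φ₀ ≤ W2sq (Φ₀.map (expMap s)) μ₁ by linarith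
  refine le_W2sq fun γ _ hγ => ?_
  obtain ⟨σ, _, hσ, rfl⟩ := hγ.exists_lift (measurable_expMap s)
  have hquad := integral_norm_expMap_sub_sq hσ hΦ₀ hμ₁
  have hc' := hc ((∫ q, ‖q.1.1 - q.2‖ ^ 2 ∂σ) / 2) (∫ q, ⟪q.1.1 - q.2, q.1.2⟫ ∂σ) fun t => by
    linarith [W2sq_map_expMap_le hσ t, hquad t]
  rw [integral_map ((measurable_expMap s).prodMap measurable_id).aemeasurable (by fun_prop)]
  change _ ≤ ∫ q, ‖expMap s q.1 - q.2‖ ^ 2 ∂σ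
  linarith [hquad s]

end
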